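/- arXiv:1309.1961 — 3 statements merged into one kernel-verified Lean document; each statement's English description precedes it below -/
import Mathlib

section
/- Let G be a graph with no star cutset and let (X₁,X₂,A₁,A₂,B₁,B₂) be a split of a 2-join of G. Then for i = 1,2: every vertex u ∈ Xᵢ has a neighbor in Xᵢ. -/
open SimpleGraph

universe u

variable {V : Type u}

/-- Removing the vertex set `S` from `G` leaves a disconnected (or empty) graph. -/
def RemoveDisconnects (G : SimpleGraph V) (S : Set V) : Prop :=
  ¬ (G.induce (Sᶜ)).Connected

/-- `S` is a star cutset of `G`: `S = {x} ∪ R` with `R ⊆ N(x)`, and removing `S`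
disconnects `G`. -/
def IsStarCutset (G : SimpleGraph V) (S : Set V) : Prop :=
  (∃ x ∈ S, ∀ y ∈ S, y = x ∨ G.Adj x y) ∧ RemoveDisconnects G S

def NoStarCutset (G : SimpleGraph V) : Prop :=
  ∀ S : Set V, ¬ IsStarCutset G S

/-- `G` is bipartite. -/
def Bipartite (G : SimpleGraph V) : Prop := G.Colorable 2

/-- Degree of a vertex, as the cardinality of its neighbor set. -/
noncomputable def deg (G : SimpleGraph V) (v : V) : ℕ := (G.neighborSet v).ncard

/-- A hole: an induced (chordless) cycle of length at least 4. -/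
def IsHole (G : SimpleGraph V) {v : V} (c : G.Walk v v) : Prop :=
  c.IsCycle ∧ 4 ≤ c.length ∧
    ∀ a b : V, a ∈ c.support → b ∈ c.support → G.Adj a b → s(a, b) ∈ c.edges

/-- `G` is balanceable: there is a signing of the edges with `+1, -1` such that
every hole has weight `≡ 0 (mod 4)`. -/
def Balanceable (G : SimpleGraph V) : Prop :=
  ∃ w : Sym2 V → ℤ, (∀ e ∈ G.edgeSet, w e = 1 ∨ w e = -1) ∧
    ∀ (v : V) (c : G.Walk v v), IsHole G c → ((c.edges.map w).sum) % 4 = 0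

/-- `G` is balanced: every hole has length `≡ 0 (mod 4)`. -/
def BalancedGraph (G : SimpleGraph V) : Prop :=
  ∀ (v : V) (c : G.Walk v v), IsHole G c → c.length % 4 = 0

/-- `G` has no hole of length 4. -/
def FourHoleFree (G : SimpleGraph V) : Prop :=
  ∀ (v : V) (c : G.Walk v v), IsHole G c → c.length ≠ 4

def LinearBalanceable (G : SimpleGraph V) : Prop :=
  Balanceable G ∧ FourHoleFree G

/-- `G` is 2-connected: at least 3 vertices and deleting any vertex leaves it connected. -/
def TwoConnected (G : SimpleGraph V) : Prop :=
  3 ≤ Nat.card V ∧ ∀ v : V, (G.induce ({v}ᶜ : Set V)).Connected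

/-- `e` is a chord of the cycle `c`. -/
def IsChord (G : SimpleGraph V) {x : V} (c : G.Walk x x) (e : Sym2 V) : Prop :=
  e ∈ G.edgeSet ∧ e ∉ c.edges ∧ ∀ v ∈ e, v ∈ c.support

/-- `e` is the unique chord of the cycle `c`. -/
def IsUniqueChord (G : SimpleGraph V) {x : V} (c : G.Walk x x) (e : Sym2 V) : Prop :=
  c.IsCycle ∧ IsChord G c e ∧ ∀ f, IsChord G c f → f = e

/-- A pair of twins: distinct vertices with the same neighborhood, of size at least 3. -/
def IsTwinPair (G : SimpleGraph V) (u v : V) : Prop :=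
  u ≠ v ∧ G.neighborSet u = G.neighborSet v ∧ 3 ≤ (G.neighborSet u).ncard

/-- `v` is a cut vertex: two vertices distinct from `v` are connected in `G` but not
in `G - v`. -/
def IsCutVertex (G : SimpleGraph V) (v : V) : Prop :=
  ∃ (x y : V) (hx : x ∈ ({v}ᶜ : Set V)) (hy : y ∈ ({v}ᶜ : Set V)),
    G.Reachable x y ∧ ¬ (G.induce ({v}ᶜ : Set V)).Reachable ⟨x, hx⟩ ⟨y, hy⟩

/-- The graph `R₁₀`: the 10-cycle `x₁x₂…x₁₀x₁` together with the chords `xᵢx_{i+5}`. -/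
def R10 : SimpleGraph (ZMod 10) :=
  SimpleGraph.fromRel (fun i j => j = i + 1 ∨ j = i + 5)

/-- `H` is a chordless path (as a graph): some chordless Hamiltonian path carries all
of its edges. -/
def IsChordlessPathGraph {W : Type*} (H : SimpleGraph W) : Prop :=
  ∃ (u v : W) (p : H.Walk u v), p.IsPath ∧ (∀ w, w ∈ p.support) ∧
    ∀ e ∈ H.edgeSet, e ∈ p.edges

/-- `(X₁, X₂, A₁, A₂, B₁, B₂)` is a split of a 2-join of `G`. -/
structure TwoJoinSplit (G : SimpleGraph V) (X1 X2 A1 A2 B1 B2 : Set V) : Prop where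
  cover : ∀ v, v ∈ X1 ∨ v ∈ X2
  disj : Disjoint X1 X2
  A1sub : A1 ⊆ X1
  B1sub : B1 ⊆ X1
  A2sub : A2 ⊆ X2
  B2sub : B2 ⊆ X2
  A1B1disj : Disjoint A1 B1
  A2B2disj : Disjoint A2 B2
  A1ne : A1.Nonempty
  B1ne : B1.Nonempty
  A2ne : A2.Nonempty
  B2ne : B2.Nonempty
  adjA : ∀ a1 ∈ A1, ∀ a2 ∈ A2, G.Adj a1 a2
  adjB : ∀ b1 ∈ B1, ∀ b2 ∈ B2, G.Adj b1 b2
  noOther : ∀ x1 ∈ X1, ∀ x2 ∈ X2, G.Adj x1 x2 →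
    (x1 ∈ A1 ∧ x2 ∈ A2) ∨ (x1 ∈ B1 ∧ x2 ∈ B2)
  path1 : ∃ a b : X1, (a : V) ∈ A1 ∧ (b : V) ∈ B1 ∧ (G.induce X1).Reachable a b
  path2 : ∃ a b : X2, (a : V) ∈ A2 ∧ (b : V) ∈ B2 ∧ (G.induce X2).Reachable a b
  notPath1 : A1.ncard = 1 → B1.ncard = 1 → ¬ IsChordlessPathGraph (G.induce X1)
  notPath2 : A2.ncard = 1 → B2.ncard = 1 → ¬ IsChordlessPathGraph (G.induce X2)

/-- `(X₁, X₂, A₁, …, A₆)` is a split of a 6-join of `G`. -/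
structure SixJoinSplit (G : SimpleGraph V) (X1 X2 A1 A2 A3 A4 A5 A6 : Set V) : Prop where
  cover : ∀ v, v ∈ X1 ∨ v ∈ X2
  disj : Disjoint X1 X2
  sub1 : A1 ⊆ X1
  sub3 : A3 ⊆ X1
  sub5 : A5 ⊆ X1
  sub2 : A2 ⊆ X2
  sub4 : A4 ⊆ X2
  sub6 : A6 ⊆ X2
  disj13 : Disjoint A1 A3
  disj15 : Disjoint A1 A5
  disj35 : Disjoint A3 A5
  disj24 : Disjoint A2 A4
  disj26 : Disjoint A2 A6
  disj46 : Disjoint A4 A6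
  ne1 : A1.Nonempty
  ne2 : A2.Nonempty
  ne3 : A3.Nonempty
  ne4 : A4.Nonempty
  ne5 : A5.Nonempty
  ne6 : A6.Nonempty
  adj12 : ∀ a ∈ A1, ∀ b ∈ A2, G.Adj a b
  adj23 : ∀ a ∈ A2, ∀ b ∈ A3, G.Adj a b
  adj34 : ∀ a ∈ A3, ∀ b ∈ A4, G.Adj a b
  adj45 : ∀ a ∈ A4, ∀ b ∈ A5, G.Adj a b
  adj56 : ∀ a ∈ A5, ∀ b ∈ A6, G.Adj a b
  adj61 : ∀ a ∈ A6, ∀ b ∈ A1, G.Adj a b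
  noOther : ∀ x ∈ X1, ∀ y ∈ X2, G.Adj x y →
    (x ∈ A1 ∧ y ∈ A2) ∨ (x ∈ A1 ∧ y ∈ A6) ∨ (x ∈ A3 ∧ y ∈ A2) ∨
    (x ∈ A3 ∧ y ∈ A4) ∨ (x ∈ A5 ∧ y ∈ A4) ∨ (x ∈ A5 ∧ y ∈ A6)
  card1 : 4 ≤ X1.ncard
  card2 : 4 ≤ X2.ncard

theorem NoStarCutset.exists_adj_notMem_insert {G : SimpleGraph V} (hG : NoStarCutset G)
    {a u b : V} {N : Set V} (hN : ∀ y ∈ N, G.Adj a y) (hu : u ∉ insert a N)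
    (hb : b ∉ insert a N) (hub : u ≠ b) : ∃ w, G.Adj u w ∧ w ∉ insert a N := by
  by_contra! hcut
  refine hG (insert a N) ⟨⟨a, Set.mem_insert a N, ?_⟩, fun hconn => ?_⟩
  · rintro y (rfl | hy)
    exacts [Or.inl rfl, Or.inr (hN y hy)]
  · obtain ⟨p⟩ := hconn.preconnected ⟨u, hu⟩ ⟨b, hb⟩
    have hnil : ¬ p.Nil := Walk.not_nil_of_ne fun h => hub (congrArg Subtype.val h)
    exact p.snd.2 (hcut _ (p.adj_snd hnil))

namespace TwoJoinSplit

variable {G : SimpleGraph V} {X1 X2 A1 A2 B1 B2 : Set V}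

theorem symm (h : TwoJoinSplit G X1 X2 A1 A2 B1 B2) : TwoJoinSplit G X2 X1 A2 A1 B2 B1 where
  cover v := (h.cover v).symm
  disj := h.disj.symm
  A1sub := h.A2sub
  B1sub := h.B2sub
  A2sub := h.A1sub
  B2sub := h.B1sub
  A1B1disj := h.A2B2disj
  A2B2disj := h.A1B1disj
  A1ne := h.A2ne
  B1ne := h.B2ne
  A2ne := h.A1ne
  B2ne := h.B1ne
  adjA a2 ha2 a1 ha1 := (h.adjA a1 ha1 a2 ha2).symm
  adjB b2 hb2 b1 hb1 := (h.adjB b1 hb1 b2 hb2).symm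
  noOther x2 hx2 x1 hx1 hadj := by
    rcases h.noOther x1 hx1 x2 hx2 hadj.symm with ⟨h1, h2⟩ | ⟨h1, h2⟩
    exacts [Or.inl ⟨h2, h1⟩, Or.inr ⟨h2, h1⟩]
  path1 := h.path2
  path2 := h.path1
  notPath1 := h.notPath2
  notPath2 := h.notPath1

theorem swapAB (h : TwoJoinSplit G X1 X2 A1 A2 B1 B2) : TwoJoinSplit G X1 X2 B1 B2 A1 A2 where
  cover := h.cover
  disj := h.disj
  A1sub := h.B1sub
  B1sub := h.A1sub
  A2sub := h.B2sub
  B2sub := h.A2sub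
  A1B1disj := h.A1B1disj.symm
  A2B2disj := h.A2B2disj.symm
  A1ne := h.B1ne
  B1ne := h.A1ne
  A2ne := h.B2ne
  B2ne := h.A2ne
  adjA := h.adjB
  adjB := h.adjA
  noOther x1 hx1 x2 hx2 hadj := (h.noOther x1 hx1 x2 hx2 hadj).symm
  path1 := by
    obtain ⟨a, b, ha, hb, hab⟩ := h.path1
    exact ⟨b, a, hb, ha, hab.symm⟩
  path2 := by
    obtain ⟨a, b, ha, hb, hab⟩ := h.path2
    exact ⟨b, a, hb, ha, hab.symm⟩
  notPath1 hB hA := h.notPath1 hA hB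
  notPath2 hB hA := h.notPath2 hA hB

/-- If another vertex `a` of `A₁` exists, `{a} ∪ A₂` is a star cutset separating `u` from `B₁`;
otherwise `A₁ = {u}` and the first edge of an `A₁`–`B₁` path in `G[X₁]` is a neighbor of `u`
in `X₁`. -/
theorem false_of_neighborSet_subset (h : TwoJoinSplit G X1 X2 A1 A2 B1 B2)
    (hstar : NoStarCutset G) {u : V} (hu : u ∈ X1) (huB : u ∉ B1)
    (hN : ∀ w, G.Adj u w → w ∈ A2) : False := by
  have hX2 : ∀ {x}, x ∈ X1 → x ∉ A2 := fun hx hxA => h.disj.ne_of_mem hx (h.A2sub hxA) rfl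
  by_cases hA : ∃ a ∈ A1, a ≠ u
  · obtain ⟨a, haA, hau⟩ := hA
    obtain ⟨b, hbB⟩ := h.B1ne
    have hbX := h.B1sub hbB
    have hu' : u ∉ insert a A2 := by
      rintro (rfl | huA)
      exacts [hau rfl, hX2 hu huA]
    have hb' : b ∉ insert a A2 := by
      rintro (rfl | hbA)
      exacts [h.A1B1disj.ne_of_mem haA hbB rfl, hX2 hbX hbA]
    obtain ⟨w, huw, hw⟩ := hstar.exists_adj_notMem_insert (h.adjA a haA) hu' hb'
      (fun hub => huB (hub ▸ hbB))
    exact hw (Set.mem_insert_of_mem a (hN w huw))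
  · push Not at hA
    obtain ⟨a, b, haA, hbB, ⟨p⟩⟩ := h.path1
    have hau : (a : V) = u := hA a haA
    have hnil : ¬ p.Nil := Walk.not_nil_of_ne fun hab => huB (hau ▸ hab ▸ hbB)
    have hadj : G.Adj u p.snd := hau ▸ p.adj_snd hnil
    exact hX2 p.snd.2 (hN _ hadj)

theorem exists_adj_mem_left (h : TwoJoinSplit G X1 X2 A1 A2 B1 B2) (hstar : NoStarCutset G) :
    ∀ u ∈ X1, ∃ w ∈ X1, G.Adj u w := by
  intro u hu
  by_contra! hisol
  have hN : ∀ w, G.Adj u w → (u ∈ A1 ∧ w ∈ A2) ∨ (u ∈ B1 ∧ w ∈ B2) := fun w huw =>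
    (h.cover w).elim (fun hw => absurd huw (hisol w hw)) (h.noOther u hu w · huw)
  by_cases huB : u ∈ B1
  · have huA : u ∉ A1 := h.A1B1disj.notMem_of_mem_right huB
    refine h.swapAB.false_of_neighborSet_subset hstar hu huA fun w huw => ?_
    exact ((hN w huw).resolve_left fun hA => huA hA.1).2
  · refine h.false_of_neighborSet_subset hstar hu huB fun w huw => ?_
    exact ((hN w huw).resolve_right fun hB => huB hB.1).2

end TwoJoinSplit

theorem stmt2_general {V : Type u} (G : SimpleGraph V)
    (X1 X2 A1 A2 B1 B2 : Set V)
    (hsplit : TwoJoinSplit G X1 X2 A1 A2 B1 B2)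
    (hstar : NoStarCutset G) :
    (∀ u ∈ X1, ∃ w ∈ X1, G.Adj u w) ∧ (∀ u ∈ X2, ∃ w ∈ X2, G.Adj u w) :=
  ⟨hsplit.exists_adj_mem_left hstar, hsplit.symm.exists_adj_mem_left hstar⟩

/-- with no star cutset, every vertex of `Xᵢ` has a neighbor in `Xᵢ`. -/
theorem stmt2 {V : Type u} [Fintype V] (G : SimpleGraph V)
    (X1 X2 A1 A2 B1 B2 : Set V)
    (hsplit : TwoJoinSplit G X1 X2 A1 A2 B1 B2)
    (hstar : NoStarCutset G) :
    (∀ u ∈ X1, ∃ w ∈ X1, G.Adj u w) ∧ (∀ u ∈ X2, ∃ w ∈ X2, G.Adj u w) :=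
  stmt2_general G X1 X2 A1 A2 B1 B2 hsplit hstar
end

section
/- Let G be a bipartite graph with no star cutset that has a 6-join with split (X₁,X₂,A₁,...,A₆). If G is 4-hole-free or has maximum degree at most 3, then |Aᵢ| = 1 for every i ∈ {1,...,6}, and every vertex of A₁ ∪ ... ∪ A₆ has degree at least 3 in G. -/
open SimpleGraph

universe u

variable {V : Type u}

/-!
If `A₁` contains two vertices `a ≠ a'`, then for `b ∈ A₂` and `c ∈ A₆` the square `a b a' c` is a
4-hole, since bipartiteness forbids the chords `aa'` and `bc`. If instead the maximum degree is 3,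
the neighbourhoods of `A₂` and `A₆` are `A₁ ∪ A₃` and `A₁ ∪ A₅`, so they lie in `X₁`. Either
`|A₂ ∪ A₆| ≥ 3`, and then `a` and `a'` are twins, making `{a} ∪ N(a)` a star cutset; or, for
`d ∈ A₄`, the set `X₂ \ (A₂ ∪ A₆ ∪ {d})` is nonempty since `|X₂| ≥ 4`, and the star
`{d} ∪ A₃ ∪ A₅` cuts it off from `A₁`.

Once all the `Aᵢ` are singletons, a vertex `a₁ ∈ A₁` of degree 2 has no neighbour in `X₁`, so the
star `{a₄} ∪ A₃ ∪ A₅` separates it from the nonempty set `X₁ \ (A₁ ∪ A₃ ∪ A₅)`. Rotating the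
6-join gives both statements for every `i`.
-/

section StarCutsets

variable {G : SimpleGraph V}

lemma Bipartite.not_adj_of_adj_of_adj (hbip : Bipartite G) {a b c : V}
    (hac : G.Adj a c) (hbc : G.Adj b c) : ¬ G.Adj a b := by
  obtain ⟨C⟩ := hbip
  intro hab
  have key : ∀ x y z : Fin 2, x ≠ z → y ≠ z → x = y := by decide
  exact C.valid hab (key _ _ _ (C.valid hac) (C.valid hbc))

lemma Bipartite.isHole_square (hbip : Bipartite G) {a b c d : V} (hab : G.Adj a b)
    (hbc : G.Adj b c) (hcd : G.Adj c d) (hda : G.Adj d a) (hac : a ≠ c) (hbd : b ≠ d) :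
    IsHole G (.cons hab (.cons hbc (.cons hcd (.cons hda .nil)))) := by
  have hnac : ¬ G.Adj a c := hbip.not_adj_of_adj_of_adj hab hbc.symm
  have hnbd : ¬ G.Adj b d := hbip.not_adj_of_adj_of_adj hab.symm hda
  refine ⟨?_, by simp, ?_⟩
  · rw [Walk.cons_isCycle_iff]
    simp [Walk.isPath_def, hab.ne, hbc.ne, hcd.ne, hda.ne, hab.ne.symm, hda.ne.symm, hac, hbd,
      hac.symm]
  · intro x y hx hy hxy
    simp only [Walk.support_cons, Walk.support_nil, List.mem_cons, List.not_mem_nil,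
      or_false] at hx hy
    rcases hx with rfl | rfl | rfl | rfl | rfl <;> rcases hy with rfl | rfl | rfl | rfl | rfl <;>
      first
        | exact absurd hxy hnac | exact absurd hxy.symm hnac
        | exact absurd hxy hnbd | exact absurd hxy.symm hnbd
        | exact absurd rfl hxy.ne | simp

lemma mem_of_closed_of_connected_induce {S Y : Set V} (hconn : (G.induce Sᶜ).Connected)
    (hY : ∀ u ∈ Y, ∀ t ∉ S, G.Adj u t → t ∈ Y) {y z : V} (hy : y ∈ Y) (hyS : y ∉ S)
    (hz : z ∉ S) : z ∈ Y := by
  suffices ∀ {u v : ↥Sᶜ}, (G.induce Sᶜ).Walk u v → (u : V) ∈ Y → (v : V) ∈ Y from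
    this (hconn.preconnected ⟨y, hyS⟩ ⟨z, hz⟩).some hy
  intro u v p
  induction p with
  | nil => exact id
  | @cons _ v _ hadj _ ih => exact fun hu => ih (hY _ hu _ v.2 hadj)

lemma NoStarCutset.mem_of_closed (hstar : NoStarCutset G) {x : V} {R Y : Set V}
    (hR : ∀ r ∈ R, G.Adj x r) (hY : ∀ u ∈ Y, ∀ t ∉ {x} ∪ R, G.Adj u t → t ∈ Y) {y z : V}
    (hy : y ∈ Y) (hyS : y ∉ {x} ∪ R) (hz : z ∉ {x} ∪ R) : z ∈ Y := by
  by_contra hzY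
  refine hstar ({x} ∪ R) ⟨⟨x, Or.inl rfl, ?_⟩, fun hconn => hzY ?_⟩
  · rintro r (rfl | hr)
    exacts [Or.inl rfl, Or.inr (hR r hr)]
  · exact mem_of_closed_of_connected_induce hconn hY hy hyS hz

lemma NoStarCutset.eq_of_neighborSet_subset (hstar : NoStarCutset G) {a a' z : V} (hne : a' ≠ a)
    (hN : G.neighborSet a' ⊆ G.neighborSet a) (hz : z ∉ {a} ∪ G.neighborSet a) : z = a' := by
  have ha' : a' ∉ {a} ∪ G.neighborSet a := by
    rintro (h | h)
    · exact hne h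
    · exact G.irrefl (hN (G.adj_symm h))
  refine hstar.mem_of_closed (Y := {a'}) (fun _ h => h) ?_ rfl ha' hz
  rintro u rfl t ht hadj
  exact absurd (Or.inr (hN hadj)) ht

lemma neighborSet_eq_of_subset_of_deg_le [Finite V] {v : V} {s : Set V}
    (hs : s ⊆ G.neighborSet v) (hdeg : deg G v ≤ s.ncard) : G.neighborSet v = s :=
  (Set.eq_of_subset_of_ncard_le hs hdeg).symm

end StarCutsets

namespace SixJoinSplit

variable {G : SimpleGraph V} {X1 X2 A1 A2 A3 A4 A5 A6 : Set V}

lemma rotate (h : SixJoinSplit G X1 X2 A1 A2 A3 A4 A5 A6) :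
    SixJoinSplit G X2 X1 A2 A3 A4 A5 A6 A1 where
  cover v := (h.cover v).symm
  disj := h.disj.symm
  sub1 := h.sub2
  sub3 := h.sub4
  sub5 := h.sub6
  sub2 := h.sub3
  sub4 := h.sub5
  sub6 := h.sub1
  disj13 := h.disj24
  disj15 := h.disj26
  disj35 := h.disj46
  disj24 := h.disj35
  disj26 := h.disj13.symm
  disj46 := h.disj15.symm
  ne1 := h.ne2
  ne2 := h.ne3
  ne3 := h.ne4
  ne4 := h.ne5
  ne5 := h.ne6
  ne6 := h.ne1
  adj12 := h.adj23
  adj23 := h.adj34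
  adj34 := h.adj45
  adj45 := h.adj56
  adj56 := h.adj61
  adj61 := h.adj12
  noOther x hx y hy hxy := by
    rcases h.noOther y hy x hx hxy.symm with ⟨h1, h2⟩ | ⟨h1, h2⟩ | ⟨h1, h2⟩ | ⟨h1, h2⟩ |
      ⟨h1, h2⟩ | ⟨h1, h2⟩ <;> tauto
  card1 := h.card2
  card2 := h.card1

lemma ne_of_mem_of_mem (h : SixJoinSplit G X1 X2 A1 A2 A3 A4 A5 A6) {x y : V} (hx : x ∈ X1)
    (hy : y ∈ X2) : x ≠ y := by
  rintro rfl
  exact Set.disjoint_left.mp h.disj hx hy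

lemma not_adj_of_mem_diff (h : SixJoinSplit G X1 X2 A1 A2 A3 A4 A5 A6) {x y : V}
    (hx : x ∈ X1 \ (A1 ∪ A3 ∪ A5)) (hy : y ∈ X2) : ¬ G.Adj x y := by
  intro hxy
  have := h.noOther x hx.1 y hy hxy
  have := hx.2
  simp only [Set.mem_union] at this
  tauto

lemma mem_A3_union_A5_of_adj (h : SixJoinSplit G X1 X2 A1 A2 A3 A4 A5 A6) {x y : V} (hx : x ∈ X1)
    (hy : y ∈ X2) (hy26 : y ∉ A2 ∪ A6) (hxy : G.Adj x y) : x ∈ A3 ∪ A5 := by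
  have := h.noOther x hx y hy hxy
  simp only [Set.mem_union] at hy26 ⊢
  tauto

lemma adj_of_mem_A3_union_A5 (h : SixJoinSplit G X1 X2 A1 A2 A3 A4 A5 A6) {d : V} (hd : d ∈ A4) :
    ∀ r ∈ A3 ∪ A5, G.Adj d r := by
  rintro r (hr | hr)
  exacts [(h.adj34 r hr d hd).symm, h.adj45 d hd r hr]

lemma subsingleton_A1_of_fourHoleFree (h : SixJoinSplit G X1 X2 A1 A2 A3 A4 A5 A6)
    (hbip : Bipartite G) (h4 : FourHoleFree G) : A1.Subsingleton := by
  intro a ha a' ha'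
  by_contra hne
  obtain ⟨b, hb⟩ := h.ne2
  obtain ⟨c, hc⟩ := h.ne6
  have hbc : b ≠ c := fun e => Set.disjoint_left.mp h.disj26 hb (e ▸ hc)
  exact h4 a _ (hbip.isHole_square (h.adj12 a ha b hb) (h.adj12 a' ha' b hb).symm
    (h.adj61 c hc a' ha').symm (h.adj61 c hc a ha) hne hbc) rfl

lemma X2_subset_of_neighborSet_subset_X1 (h : SixJoinSplit G X1 X2 A1 A2 A3 A4 A5 A6)
    (hstar : NoStarCutset G) (hN : ∀ b ∈ A2 ∪ A6, G.neighborSet b ⊆ X1) {d : V} (hd : d ∈ A4) :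
    X2 ⊆ A2 ∪ A6 ∪ {d} := by
  intro z hz
  by_contra hzY
  obtain ⟨a, ha⟩ := h.ne1
  have hout : ∀ {v}, v ∈ X2 → v ≠ d → v ∉ {d} ∪ (A3 ∪ A5) := by
    rintro v hv hvd (hv' | hv' | hv')
    exacts [hvd hv', h.ne_of_mem_of_mem (h.sub3 hv') hv rfl,
      h.ne_of_mem_of_mem (h.sub5 hv') hv rfl]
  have haS : a ∉ {d} ∪ (A3 ∪ A5) := by
    rintro (had | ha' | ha')
    exacts [h.ne_of_mem_of_mem (h.sub1 ha) (h.sub4 hd) had, Set.disjoint_left.mp h.disj13 ha ha',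
      Set.disjoint_left.mp h.disj15 ha ha']
  refine h.ne_of_mem_of_mem (h.sub1 ha) (hstar.mem_of_closed (Y := X2 \ (A2 ∪ A6 ∪ {d}))
    (h.adj_of_mem_A3_union_A5 hd) ?_ ⟨hz, hzY⟩ (hout hz fun e => hzY (Or.inr e)) haS).1 rfl
  rintro u ⟨hu, hu'⟩ t ht hut
  rcases h.cover t with htX1 | htX2
  · have := h.mem_A3_union_A5_of_adj htX1 hu (fun h' => hu' (Or.inl h')) hut.symm
    exact absurd (Or.inr this) ht
  · refine ⟨htX2, ?_⟩
    rintro (ht' | ht')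
    · exact h.ne_of_mem_of_mem (hN t ht' hut.symm) hu rfl
    · exact ht (Or.inl ht')

lemma X1_subset_of_neighborSet_subset_X2 (h : SixJoinSplit G X1 X2 A1 A2 A3 A4 A5 A6)
    (hstar : NoStarCutset G) (hN : ∀ a ∈ A1, G.neighborSet a ⊆ X2) : X1 ⊆ A1 ∪ A3 ∪ A5 := by
  intro z hz
  by_contra hzY
  obtain ⟨a, ha⟩ := h.ne1
  obtain ⟨d, hd⟩ := h.ne4
  have hout : ∀ {v}, v ∈ X1 → v ∉ A3 ∪ A5 → v ∉ {d} ∪ (A3 ∪ A5) := by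
    rintro v hv hv35 (hvd | hv')
    exacts [h.ne_of_mem_of_mem hv (h.sub4 hd) hvd, hv35 hv']
  have haS : a ∉ {d} ∪ (A3 ∪ A5) := hout (h.sub1 ha) fun ha' => ha'.elim
    (Set.disjoint_left.mp h.disj13 ha) (Set.disjoint_left.mp h.disj15 ha)
  refine (hstar.mem_of_closed (Y := X1 \ (A1 ∪ A3 ∪ A5)) (h.adj_of_mem_A3_union_A5 hd) ?_
    ⟨hz, hzY⟩ (hout hz fun h' => hzY (by rw [Set.union_assoc]; exact Or.inr h')) haS).2
    (Or.inl (Or.inl ha))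
  rintro u hu t ht hut
  rcases h.cover t with htX1 | htX2
  · refine ⟨htX1, ?_⟩
    rintro ((ht' | ht') | ht')
    · exact h.ne_of_mem_of_mem hu.1 (hN t ht' hut.symm) rfl
    · exact ht (Or.inr (Or.inl ht'))
    · exact ht (Or.inr (Or.inr ht'))
  · exact absurd hut (h.not_adj_of_mem_diff hu htX2)

lemma union_subset_neighborSet_of_mem_A1 (h : SixJoinSplit G X1 X2 A1 A2 A3 A4 A5 A6) {a : V}
    (ha : a ∈ A1) : A2 ∪ A6 ⊆ G.neighborSet a := by
  rintro t (ht | ht)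
  exacts [h.adj12 a ha t ht, (h.adj61 t ht a ha).symm]

lemma neighborSet_subset_X1_of_deg_le_three [Finite V]
    (h : SixJoinSplit G X1 X2 A1 A2 A3 A4 A5 A6) (hdeg : ∀ v, deg G v ≤ 3) (hA1 : 2 ≤ A1.ncard) :
    ∀ b ∈ A2 ∪ A6, G.neighborSet b ⊆ X1 := by
  rintro b (hb | hb)
  · rw [neighborSet_eq_of_subset_of_deg_le (s := A1 ∪ A3) ?_ ?_]
    · exact Set.union_subset h.sub1 h.sub3
    · rintro t (ht | ht)
      exacts [(h.adj12 t ht b hb).symm, h.adj23 b hb t ht]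
    · have := (Set.ncard_pos).2 h.ne3
      rw [Set.ncard_union_eq h.disj13]
      linarith [hdeg b]
  · rw [neighborSet_eq_of_subset_of_deg_le (s := A1 ∪ A5) ?_ ?_]
    · exact Set.union_subset h.sub1 h.sub5
    · rintro t (ht | ht)
      exacts [h.adj61 b hb t ht, (h.adj56 t ht b hb).symm]
    · have := (Set.ncard_pos).2 h.ne5
      rw [Set.ncard_union_eq h.disj15]
      linarith [hdeg b]

lemma subsingleton_A1_of_deg_le_three [Finite V] (h : SixJoinSplit G X1 X2 A1 A2 A3 A4 A5 A6)
    (hstar : NoStarCutset G) (hdeg : ∀ v, deg G v ≤ 3) : A1.Subsingleton := by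
  rw [← Set.not_nontrivial_iff]
  intro hnt
  have hN := h.neighborSet_subset_X1_of_deg_le_three hdeg (Set.one_lt_ncard_iff_nontrivial.2 hnt)
  obtain ⟨a, ha, a', ha', hne⟩ := hnt
  by_cases hA26 : 3 ≤ (A2 ∪ A6).ncard
  · have hNA1 : ∀ x ∈ A1, G.neighborSet x = A2 ∪ A6 := fun x hx =>
      neighborSet_eq_of_subset_of_deg_le (h.union_subset_neighborSet_of_mem_A1 hx)
        ((hdeg x).trans hA26)
    obtain ⟨u, hu⟩ := h.ne3
    have hu' : u ∉ {a} ∪ G.neighborSet a := by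
      rw [hNA1 a ha]
      rintro (hua | hu' | hu')
      exacts [Set.disjoint_left.mp h.disj13 ha (hua ▸ hu), h.ne_of_mem_of_mem (h.sub3 hu)
        (h.sub2 hu') rfl, h.ne_of_mem_of_mem (h.sub3 hu) (h.sub6 hu') rfl]
    have hua' : u = a' := hstar.eq_of_neighborSet_subset (Ne.symm hne)
      (by rw [hNA1 a ha, hNA1 a' ha']) hu'
    exact Set.disjoint_left.mp h.disj13 ha' (hua' ▸ hu)
  · obtain ⟨d, hd⟩ := h.ne4
    have hX2 := Set.ncard_le_ncard (h.X2_subset_of_neighborSet_subset_X1 hstar hN hd)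
    have := Set.ncard_union_le (A2 ∪ A6) {d}
    rw [Set.ncard_singleton] at this
    linarith [h.card2]

lemma three_le_deg_of_mem_A1 [Finite V] (h : SixJoinSplit G X1 X2 A1 A2 A3 A4 A5 A6)
    (hstar : NoStarCutset G) (h1 : A1.Subsingleton) (h3 : A3.Subsingleton)
    (h5 : A5.Subsingleton) {a : V} (ha : a ∈ A1) : 3 ≤ deg G a := by
  by_contra hlt
  have h26 : 2 ≤ (A2 ∪ A6).ncard := by
    have := (Set.ncard_pos).2 h.ne2
    have := (Set.ncard_pos).2 h.ne6
    rw [Set.ncard_union_eq h.disj26]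
    omega
  have hNa : G.neighborSet a = A2 ∪ A6 :=
    neighborSet_eq_of_subset_of_deg_le (h.union_subset_neighborSet_of_mem_A1 ha) (by omega)
  have hX1 := Set.ncard_le_ncard (h.X1_subset_of_neighborSet_subset_X2 hstar fun a' ha' => by
    rw [h1 ha' ha, hNa]
    exact Set.union_subset h.sub2 h.sub6)
  have := Set.ncard_union_le (A1 ∪ A3) A5
  have := Set.ncard_union_le A1 A3
  have := Set.ncard_le_one_iff_subsingleton.2 h1
  have := Set.ncard_le_one_iff_subsingleton.2 h3
  have := Set.ncard_le_one_iff_subsingleton.2 h5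
  linarith [h.card1]

end SixJoinSplit

/-- for a 6-join of a bipartite graph with no star cutset that is
4-hole-free or has maximum degree at most 3, all special sets are singletons and all
their vertices have degree at least 3. -/
theorem stmt6 {V : Type u} [Fintype V] (G : SimpleGraph V)
    (X1 X2 A1 A2 A3 A4 A5 A6 : Set V)
    (hbip : Bipartite G)
    (hsplit : SixJoinSplit G X1 X2 A1 A2 A3 A4 A5 A6)
    (hstar : NoStarCutset G)
    (hcase : FourHoleFree G ∨ ∀ v, deg G v ≤ 3) :
    (A1.ncard = 1 ∧ A2.ncard = 1 ∧ A3.ncard = 1 ∧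
     A4.ncard = 1 ∧ A5.ncard = 1 ∧ A6.ncard = 1) ∧
    ∀ v ∈ A1 ∪ A2 ∪ A3 ∪ A4 ∪ A5 ∪ A6, 3 ≤ deg G v := by
  have hsub : ∀ {X1 X2 A1 A2 A3 A4 A5 A6 : Set V},
      SixJoinSplit G X1 X2 A1 A2 A3 A4 A5 A6 → A1.Subsingleton := fun h =>
    hcase.elim (h.subsingleton_A1_of_fourHoleFree hbip) (h.subsingleton_A1_of_deg_le_three hstar)
  have hone : ∀ {A : Set V}, A.Nonempty → A.Subsingleton → A.ncard = 1 := fun ⟨a, ha⟩ hA =>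
    Set.ncard_eq_one.2 ⟨a, hA.eq_singleton_of_mem ha⟩
  have s1 := hsplit.rotate
  have s2 := s1.rotate
  have s3 := s2.rotate
  have s4 := s3.rotate
  have s5 := s4.rotate
  have e1 := hsub hsplit
  have e2 := hsub s1
  have e3 := hsub s2
  have e4 := hsub s3
  have e5 := hsub s4
  have e6 := hsub s5
  refine ⟨⟨hone hsplit.ne1 e1, hone hsplit.ne2 e2, hone hsplit.ne3 e3, hone hsplit.ne4 e4,
    hone hsplit.ne5 e5, hone hsplit.ne6 e6⟩, ?_⟩
  rintro v (((((hv | hv) | hv) | hv) | hv) | hv)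
  exacts [hsplit.three_le_deg_of_mem_A1 hstar e1 e3 e5 hv,
    s1.three_le_deg_of_mem_A1 hstar e2 e4 e6 hv,
    s2.three_le_deg_of_mem_A1 hstar e3 e5 e1 hv,
    s3.three_le_deg_of_mem_A1 hstar e4 e6 e2 hv,
    s4.three_le_deg_of_mem_A1 hstar e5 e1 e3 hv,
    s5.three_le_deg_of_mem_A1 hstar e6 e2 e4 hv]
end

section
/- Let G be a 2-connected 4-hole-free bipartite graph that has a star cutset. Then G has a double star cutset one of whose blocks of decomposition has no star cutset. Specifically, if Gᵢ is a minimal side of a minimally-sided double star cutset of G, then Gᵢ has no star cutset. -/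
open SimpleGraph

universe u

variable {V : Type u}

/-- `S` is a double star cutset of `G`. -/
def IsDoubleStarCutset (G : SimpleGraph V) (S : Set V) : Prop :=
  (∃ u ∈ S, ∃ v ∈ S, G.Adj u v ∧
    ∀ w ∈ S, w = u ∨ w = v ∨ G.Adj u w ∨ G.Adj v w) ∧
  RemoveDisconnects G S

/-- `W` is (the vertex set of) a block of decomposition of `G` with respect to some
double star cutset. -/
def IsDSCBlock (G : SimpleGraph V) (W : Set V) : Prop :=
  ∃ S C1 C2 : Set V, IsDoubleStarCutset G S ∧
    C1.Nonempty ∧ C2.Nonempty ∧ Disjoint C1 C2 ∧ C1 ∪ C2 = Sᶜ ∧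
    (∀ x ∈ C1, ∀ y ∈ C2, ¬ G.Adj x y) ∧ W = S ∪ C1

/-- `W` is a minimal side of a minimally-sided double star cutset of `G`. -/
def IsMinimalDSCSide (G : SimpleGraph V) (W : Set V) : Prop :=
  IsDSCBlock G W ∧ ∀ W' : Set V, IsDSCBlock G W' → ¬ W' ⊂ W


/-!
A bipartite graph is triangle-free, so a 4-hole-free bipartite graph has no 4-cycle at all, and a
vertex outside a star `{x} ∪ R` has at most one neighbour in it. In a 2-connected triangle-free
graph a star cutset is neither `{x}` nor all of `V`, hence is a double star cutset, and as `G` is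
finite some block `W = S ∪ C₁` is minimal under inclusion. Suppose `T` is a star cutset of `G[W]`
with centre `x`. Since `u` and `v` (the centre edge of `S`) are adjacent, some side `D` of
`G[W] \ T` avoids both of them, so every `s ∈ S ∩ D` is adjacent to `u` or `v` inside `T`. By
triangle-freeness `T ∪ (S ∩ D)` is then a double star or just `{x}` (a cut vertex), and it cuts
`D \ S` off `G`: if `D \ S ≠ ∅` this is a block properly inside `W`. If `D ⊆ S`, minimality gives
`s ∈ D` a neighbour in `C₁`, which lies in `T`, and so `s` has two neighbours in the star `T`.
-/

namespace SimpleGraph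

variable {G : SimpleGraph V}

lemma subset_of_induce_connected {X D : Set V} (hX : (G.induce X).Connected)
    (hD : ∀ y ∈ D, ∀ z ∈ X, G.Adj y z → z ∈ D) {y : V} (hyD : y ∈ D) (hyX : y ∈ X) :
    X ⊆ D := by
  intro z hz
  obtain ⟨w⟩ := hX.preconnected ⟨y, hyX⟩ ⟨z, hz⟩
  suffices ∀ {a b : X}, (G.induce X).Walk a b → (a : V) ∈ D → (b : V) ∈ D from this w hyD
  intro a b w
  induction w with
  | nil => exact id
  | cons h _ ih => exact fun ha => ih (hD _ ha _ (Subtype.prop _) h)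

lemma exists_closed_of_not_induce_connected {X : Set V} (h : ¬ (G.induce X).Connected) :
    X = ∅ ∨ ∃ D ⊆ X, D.Nonempty ∧ (X \ D).Nonempty ∧ ∀ y ∈ D, ∀ z ∈ X, G.Adj y z → z ∈ D := by
  rcases X.eq_empty_or_nonempty with hX | ⟨p, hp⟩
  · exact Or.inl hX
  have : ¬ (G.induce X).Preconnected := fun hpre => h (connected_iff _ |>.2 ⟨hpre, ⟨p, hp⟩⟩)
  obtain ⟨a, b, hab⟩ : ∃ a b : X, ¬ (G.induce X).Reachable a b := by
    simpa [Preconnected] using this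
  refine Or.inr ⟨{z | ∃ hz : z ∈ X, (G.induce X).Reachable a ⟨z, hz⟩}, fun z hz => hz.1,
    ⟨a, a.2, .rfl⟩, ⟨b, b.2, fun ⟨_, hr⟩ => hab hr⟩, ?_⟩
  rintro y ⟨hy, hr⟩ z hz hyz
  exact ⟨hz, hr.trans (Adj.reachable (show (G.induce X).Adj ⟨y, hy⟩ ⟨z, hz⟩ from hyz))⟩

lemma closed_diff_of_closed {X D : Set V} (hD : ∀ y ∈ D, ∀ z ∈ X, G.Adj y z → z ∈ D) :
    ∀ y ∈ X \ D, ∀ z ∈ X, G.Adj y z → z ∈ X \ D :=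
  fun y hy z hz hyz => ⟨hz, fun hzD => hy.2 (hD z hzD y hy.1 hyz.symm)⟩

lemma Adj.notMem_or_notMem_diff {X D : Set V} (hD : ∀ y ∈ D, ∀ z ∈ X, G.Adj y z → z ∈ D)
    {u v : V} (huv : G.Adj u v) : (u ∉ D ∧ v ∉ D) ∨ (u ∉ X \ D ∧ v ∉ X \ D) := by
  by_cases hu : u ∈ D
  · exact Or.inr ⟨fun h => h.2 hu, fun hv => hv.2 (hD u hu v hv.1 huv)⟩
  by_cases hv : v ∈ D
  · exact Or.inr ⟨fun h => h.2 (hD v hv u h.1 huv.symm), fun h => h.2 hv⟩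
  · exact Or.inl ⟨hu, hv⟩

lemma induce_induce_connected_iff {W : Set V} {T : Set W} :
    ((G.induce W).induce Tᶜ).Connected ↔ (G.induce (W \ Subtype.val '' T)).Connected :=
  Iso.connected_iff
    { toFun := fun a => ⟨a.1, a.1.2, fun ⟨_, hb, hba⟩ => a.2 (Subtype.ext hba ▸ hb)⟩
      invFun := fun z => ⟨⟨z, z.2.1⟩, fun h => z.2.2 ⟨_, h, rfl⟩⟩
      left_inv := fun _ => rfl
      right_inv := fun _ => rfl
      map_rel_iff' := Iff.rfl }

lemma CliqueFree.not_adj_of_adj_of_adj (h : G.CliqueFree 3) {a b c : V} (hab : G.Adj a b)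
    (hac : G.Adj a c) : ¬ G.Adj b c :=
  fun hbc => by classical exact h {a, b, c} (is3Clique_triple_iff.2 ⟨hab, hac, hbc⟩)

end SimpleGraph

def IsDoubleStar (G : SimpleGraph V) (X : Set V) : Prop :=
  ∃ p ∈ X, ∃ q ∈ X, G.Adj p q ∧ ∀ w ∈ X, w = p ∨ w = q ∨ G.Adj p w ∨ G.Adj q w

def FourCycleFree (G : SimpleGraph V) : Prop :=
  ∀ a b c d : V, G.Adj a b → G.Adj b c → G.Adj c d → G.Adj d a → a = c ∨ b = d

section

variable {G : SimpleGraph V}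

lemma Bipartite.cliqueFree_three (h : Bipartite G) : G.CliqueFree 3 :=
  Colorable.cliqueFree h (by norm_num)

lemma FourHoleFree.fourCycleFree (h4 : FourHoleFree G) (htri : G.CliqueFree 3) :
    FourCycleFree G := by
  intro a b c d hab hbc hcd hda
  by_contra! hne
  have hac : ¬ G.Adj a c := htri.not_adj_of_adj_of_adj hab.symm hbc
  have hbd : ¬ G.Adj b d := htri.not_adj_of_adj_of_adj hbc.symm hcd
  let w : G.Walk a a := .cons hab (.cons hbc (.cons hcd (.cons hda .nil)))
  have hcycle : w.IsCycle := by
    have := hab.ne; have := hbc.ne; have := hcd.ne; have := hda.ne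
    refine (Walk.isCycle_def _).2 ⟨(Walk.isTrail_def _).2 ?_, by simp [w], ?_⟩ <;> simp [w] <;>
      grind
  refine h4 a w ⟨hcycle, le_rfl, ?_⟩ rfl
  intro p q hp hq hpq
  simp only [w, Walk.support_cons, Walk.support_nil, List.mem_cons, List.not_mem_nil,
    or_false] at hp hq
  rcases hp with rfl | rfl | rfl | rfl | rfl <;> rcases hq with rfl | rfl | rfl | rfl | rfl <;>
    simp_all [w, Sym2.eq_swap, adj_comm]

lemma isDoubleStar_or_subset_singleton {X : Set V} {x : V} (hx : x ∈ X)
    (hX : ∀ w ∈ X, w = x ∨ G.Adj x w) : IsDoubleStar G X ∨ X ⊆ {x} := by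
  by_cases h : X ⊆ {x}
  · exact Or.inr h
  obtain ⟨t, htX, htx⟩ := Set.not_subset.1 h
  refine Or.inl ⟨x, hx, t, htX, (hX t htX).resolve_left htx, fun w hw => ?_⟩
  rcases hX w hw with hw | hw
  · exact Or.inl hw
  · exact Or.inr (Or.inr (Or.inl hw))

lemma isDoubleStar_or_subset_singleton_union (htri : G.CliqueFree 3) {u v x : V}
    (huv : G.Adj u v) {T R : Set V} (hxT : x ∈ T) (hT : ∀ w ∈ T, w = x ∨ G.Adj x w)
    (hR : ∀ r ∈ R, ∃ q ∈ T, (q = u ∨ q = v) ∧ G.Adj q r) :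
    IsDoubleStar G (T ∪ R) ∨ T ∪ R ⊆ {x} := by
  by_cases hq : ∃ q ∈ T, (q = u ∨ q = v) ∧ q ≠ x
  · obtain ⟨q, hqT, hquv, hqx⟩ := hq
    have hxq : G.Adj x q := (hT q hqT).resolve_left hqx
    refine Or.inl ⟨x, Or.inl hxT, q, Or.inl hqT, hxq, ?_⟩
    rintro w (hw | hw)
    · rcases hT w hw with hw | hw
      · exact Or.inl hw
      · exact Or.inr (Or.inr (Or.inl hw))
    obtain ⟨q', hq'T, hq'uv, hq'w⟩ := hR w hw
    rcases hT q' hq'T with rfl | hxq'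
    · exact Or.inr (Or.inr (Or.inl hq'w))
    by_cases hqq' : q = q'
    · exact Or.inr (Or.inr (Or.inr (hqq' ▸ hq'w)))
    have hqq'_adj : G.Adj q q' := by
      rcases hquv with rfl | rfl <;> rcases hq'uv with rfl | rfl <;>
        first | exact (hqq' rfl).elim | exact huv | exact huv.symm
    exact (htri.not_adj_of_adj_of_adj hxq hxq' hqq'_adj).elim
  · push Not at hq
    refine isDoubleStar_or_subset_singleton (Or.inl hxT) ?_
    rintro w (hw | hw)
    · exact hT w hw
    · obtain ⟨q, hqT, hquv, hqw⟩ := hR w hw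
      exact Or.inr (hq q hqT hquv ▸ hqw)

lemma FourCycleFree.eq_of_adj_of_adj (hsq : FourCycleFree G) (htri : G.CliqueFree 3)
    {T : Set V} {x s q c : V} (hT : ∀ w ∈ T, w = x ∨ G.Adj x w) (hsx : s ≠ x)
    (hq : q ∈ T) (hc : c ∈ T) (hsq' : G.Adj s q) (hsc : G.Adj s c) : q = c := by
  rcases hT q hq with rfl | hxq <;> rcases hT c hc with rfl | hxc
  · rfl
  · exact (htri.not_adj_of_adj_of_adj hxc hsq'.symm hsc.symm).elim
  · exact (htri.not_adj_of_adj_of_adj hxq hsc.symm hsq'.symm).elim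
  · exact (hsq x q s c hxq hsq'.symm hsc hxc.symm).resolve_left hsx.symm

lemma TwoConnected.forall_eq_or_mem (h2c : TwoConnected G) {x y : V} {D : Set V} (hxD : x ∉ D)
    (hy : y ∈ D) (hD : ∀ y ∈ D, ∀ z, G.Adj y z → z = x ∨ z ∈ D) (z : V) : z = x ∨ z ∈ D := by
  refine or_iff_not_imp_left.2 fun hzx => ?_
  refine subset_of_induce_connected (h2c.2 x) (fun y hy z hz hyz => ?_) hy
    (fun h => hxD (h ▸ hy)) hzx
  exact (hD y hy z hyz).resolve_left hz

lemma TwoConnected.exists_ne_ne (h2c : TwoConnected G) (x y : V) : ∃ z, z ≠ x ∧ z ≠ y := by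
  by_contra! h
  have hsub : Set.univ ⊆ ({x, y} : Set V) := fun z _ => (em (z = x)).elim Or.inl (Or.inr ∘ h z)
  have := (Set.ncard_le_ncard hsub (Set.toFinite _)).trans (Set.ncard_insert_le x {y})
  rw [Set.ncard_univ, Set.ncard_singleton] at this
  have := h2c.1
  omega

lemma TwoConnected.forall_eq_or_eq_of_adj (h2c : TwoConnected G) (htri : G.CliqueFree 3)
    {x y : V} (hxy : G.Adj x y) (hy : ∀ z, G.Adj y z → z = x ∨ G.Adj x z) (z : V) :
    z = x ∨ z = y := by
  refine h2c.forall_eq_or_mem (D := {y}) hxy.ne rfl (fun y' hy' z hyz => ?_) z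
  rw [hy'] at hyz
  exact (hy z hyz).imp_right fun hxz => (htri.not_adj_of_adj_of_adj hxy hxz hyz).elim

lemma isDSCBlock_union {X D : Set V} (hX : IsDoubleStar G X) (hD : D.Nonempty)
    (hXD : Disjoint X D) (hcl : ∀ y ∈ D, ∀ z, G.Adj y z → z ∈ X ∪ D)
    (hout : (X ∪ D)ᶜ.Nonempty) : IsDSCBlock G (X ∪ D) := by
  have hsep : ∀ y ∈ D, ∀ z ∈ (X ∪ D)ᶜ, ¬ G.Adj y z := fun y hy z hz hyz => hz (hcl y hy z hyz)
  have hunion : D ∪ (X ∪ D)ᶜ = Xᶜ := by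
    ext z
    have := @Set.disjoint_right.1 hXD z
    simp only [Set.mem_union, Set.mem_compl_iff]
    tauto
  refine ⟨X, D, (X ∪ D)ᶜ, ⟨hX, fun hconn => ?_⟩, hD, hout,
    Set.disjoint_left.2 fun y hy hy' => hy' (Or.inr hy), hunion, hsep, rfl⟩
  obtain ⟨y, hy⟩ := hD
  obtain ⟨z, hz⟩ := hout
  have hclX : ∀ y ∈ D, ∀ z ∈ Xᶜ, G.Adj y z → z ∈ D :=
    fun y hy z hz hyz => (hcl y hy z hyz).resolve_left hz
  exact hz (Or.inr (subset_of_induce_connected hconn hclX hy (Set.disjoint_right.1 hXD hy)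
    fun hzX => hz (Or.inl hzX)))

lemma exists_isDSCBlock (h2c : TwoConnected G) (htri : G.CliqueFree 3) {S : Set V}
    (hS : IsStarCutset G S) : ∃ W, IsDSCBlock G W := by
  obtain ⟨⟨x, hxS, hdom⟩, hdisc⟩ := hS
  rcases exists_closed_of_not_induce_connected hdisc with hempty | ⟨D, hDS, hD, hrest, hcl⟩
  · have hS : ∀ z, z ∈ S := fun z => by_contra fun hz => (hempty ▸ hz : z ∈ (∅ : Set V))
    obtain ⟨y, hyx, -⟩ := h2c.exists_ne_ne x x
    have hxy : G.Adj x y := (hdom y (hS y)).resolve_left hyx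
    obtain ⟨z, hzx, hzy⟩ := h2c.exists_ne_ne x y
    exact ((h2c.forall_eq_or_eq_of_adj htri hxy fun z _ => hdom z (hS z)) z).elim hzx hzy |>.elim
  rcases isDoubleStar_or_subset_singleton hxS hdom with hX | hsub
  · obtain ⟨z, hzS, hzD⟩ := hrest
    refine ⟨S ∪ D, isDSCBlock_union hX hD (Set.disjoint_right.2 fun y hy => hDS hy) ?_
      ⟨z, fun h => h.elim hzS hzD⟩⟩
    intro y hy z hyz
    by_cases hz : z ∈ S
    · exact Or.inl hz
    · exact Or.inr (hcl y hy z hz hyz)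
  · exact (hdisc ((Set.Subset.antisymm hsub (Set.singleton_subset_iff.2 hxS)) ▸ h2c.2 x)).elim

lemma exists_isMinimalDSCSide [Finite V] {W₀ : Set V} (h : IsDSCBlock G W₀) :
    ∃ W, IsMinimalDSCSide G W := by
  obtain ⟨W, hW⟩ := exists_minimal_of_wellFoundedLT (IsDSCBlock G) ⟨W₀, h⟩
  exact ⟨W, hW.prop, fun W' hW' => hW.not_lt hW'⟩

end

/-- Unpacked form of `IsMinimalDSCSide G W` for the cutset `S` with centre edge `uv`, with
`C₁ = W \ S`. -/
structure IsMinimalDSCSideOf (G : SimpleGraph V) (W S : Set V) (u v : V) : Prop where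
  adj : G.Adj u v
  left_mem : u ∈ S
  right_mem : v ∈ S
  dominated : ∀ w ∈ S, w = u ∨ w = v ∨ G.Adj u w ∨ G.Adj v w
  subset : S ⊆ W
  diff_nonempty : (W \ S).Nonempty
  adj_mem : ∀ y ∈ W \ S, ∀ z, G.Adj y z → z ∈ W
  exists_notMem : ∃ z, z ∉ W
  minimal : ∀ W', IsDSCBlock G W' → ¬ W' ⊂ W

section

variable {G : SimpleGraph V} {W S : Set V} {u v : V}

lemma IsMinimalDSCSide.exists_isMinimalDSCSideOf (hW : IsMinimalDSCSide G W) :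
    ∃ S u v, IsMinimalDSCSideOf G W S u v := by
  obtain ⟨⟨S, C₁, C₂, ⟨⟨u, hu, v, hv, huv, hdom⟩, -⟩, ⟨y, hy⟩, ⟨c, hc⟩, hdisj, hunion, hsep, rfl⟩,
    hmin⟩ := hW
  have hC₁S : ∀ y ∈ C₁, y ∉ S := fun y hy => (hunion ▸ Or.inl hy : y ∈ Sᶜ)
  refine ⟨S, u, v, huv, hu, hv, hdom, Set.subset_union_left, ⟨y, Or.inr hy, hC₁S y hy⟩, ?_,
    ⟨c, ?_⟩, hmin⟩
  · rintro y ⟨hyW, hyS⟩ z hyz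
    by_cases hz : z ∈ S
    · exact Or.inl hz
    rcases (hunion ▸ hz : z ∈ C₁ ∪ C₂) with hz | hz
    · exact Or.inr hz
    · exact (hsep y (hyW.resolve_left hyS) z hz hyz).elim
  · rintro (h | h)
    · exact (hunion ▸ Or.inr hc : c ∈ Sᶜ) h
    · exact Set.disjoint_left.1 hdisj h hc

namespace IsMinimalDSCSideOf

lemma subset_union (h : IsMinimalDSCSideOf G W S u v) {X D : Set V} (hX : IsDoubleStar G X)
    (hD : D.Nonempty) (hXD : Disjoint X D)
    (hcl : ∀ y ∈ D, ∀ z, G.Adj y z → z ∈ X ∪ D) (hsub : X ∪ D ⊆ W) : W ⊆ X ∪ D := by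
  obtain ⟨z, hz⟩ := h.exists_notMem
  by_contra hW
  exact h.minimal _ (isDSCBlock_union hX hD hXD hcl ⟨z, fun hz' => hz (hsub hz')⟩)
    (hsub.ssubset_of_not_subset hW)

/-- Otherwise `S \ {s}` would be a double star cutset with the smaller side `W \ {s}`. -/
lemma exists_adj_diff (h : IsMinimalDSCSideOf G W S u v) {s : V} (hs : s ∈ S) (hsu : s ≠ u)
    (hsv : s ≠ v) :
    ∃ c ∈ W \ S, G.Adj s c := by
  by_contra! hno
  have hX : IsDoubleStar G (S \ {s}) := ⟨u, ⟨h.left_mem, hsu.symm⟩, v, ⟨h.right_mem, hsv.symm⟩,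
    h.adj, fun w hw => h.dominated w hw.1⟩
  have hcl : ∀ y ∈ W \ S, ∀ z, G.Adj y z → z ∈ S \ {s} ∪ W \ S := by
    intro y hy z hyz
    by_cases hz : z ∈ S
    · exact Or.inl ⟨hz, fun hzs => hno y hy ((hzs : z = s) ▸ hyz.symm)⟩
    · exact Or.inr ⟨h.adj_mem y hy z hyz, hz⟩
  have hWsub := h.subset_union hX h.diff_nonempty
    (Set.disjoint_left.2 fun y hy hy' => hy'.2 hy.1) hcl
    (Set.union_subset (Set.sdiff_subset.trans h.subset) Set.sdiff_subset)
  rcases hWsub (h.subset hs) with h' | h'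
  · exact h'.2 rfl
  · exact h'.2 hs

lemma not_subset_star (h : IsMinimalDSCSideOf G W S u v) (h2c : TwoConnected G)
    (htri : G.CliqueFree 3) {T : Set V} {x : V} (hT : ∀ w ∈ T, w = x ∨ G.Adj x w) :
    ¬ W ⊆ T := by
  intro hWT
  by_cases hxS : x ∈ S
  · obtain ⟨c, hcW, hcS⟩ := h.diff_nonempty
    have hxc : G.Adj x c := (hT c (hWT hcW)).resolve_left fun hcx => hcS (hcx ▸ hxS)
    obtain ⟨z, hz⟩ := h.exists_notMem
    rcases h2c.forall_eq_or_eq_of_adj htri hxc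
      (fun z hcz => hT z (hWT (h.adj_mem c ⟨hcW, hcS⟩ z hcz))) z with rfl | rfl
    · exact hz (h.subset hxS)
    · exact hz hcW
  · have hxu : G.Adj x u := (hT u (hWT (h.subset h.left_mem))).resolve_left
      fun hux => hxS (hux ▸ h.left_mem)
    have hxv : G.Adj x v := (hT v (hWT (h.subset h.right_mem))).resolve_left
      fun hvx => hxS (hvx ▸ h.right_mem)
    exact htri.not_adj_of_adj_of_adj hxu hxv h.adj

variable {T D : Set V} {x : V}

lemma exists_adj_of_mem_inter (h : IsMinimalDSCSideOf G W S u v)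
    (hcl : ∀ y ∈ D, ∀ z ∈ W \ T, G.Adj y z → z ∈ D) (hu : u ∉ D) (hv : v ∉ D) :
    ∀ s ∈ S ∩ D, ∃ q ∈ T, (q = u ∨ q = v) ∧ G.Adj q s := by
  rintro s ⟨hsS, hsD⟩
  have hmemT : ∀ q ∈ S, q ∉ D → G.Adj q s → q ∈ T := fun q hqS hqD hqs =>
    by_contra fun hqT => hqD (hcl s hsD q ⟨h.subset hqS, hqT⟩ hqs.symm)
  rcases h.dominated s hsS with rfl | rfl | hus | hvs
  · exact (hu hsD).elim
  · exact (hv hsD).elim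
  · exact ⟨u, hmemT u h.left_mem hu hus, Or.inl rfl, hus⟩
  · exact ⟨v, hmemT v h.right_mem hv hvs, Or.inr rfl, hvs⟩

lemma adj_mem_of_closed (h : IsMinimalDSCSideOf G W S u v) (hDW : D ⊆ W \ T)
    (hcl : ∀ y ∈ D, ∀ z ∈ W \ T, G.Adj y z → z ∈ D) :
    ∀ y ∈ D \ S, ∀ z, G.Adj y z → z ∈ T ∨ z ∈ D := by
  intro y hy z hyz
  by_cases hzT : z ∈ T
  · exact Or.inl hzT
  · exact Or.inr (hcl y hy.1 z ⟨h.adj_mem y ⟨(hDW hy.1).1, hy.2⟩ z hyz, hzT⟩ hyz)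

/-- Otherwise `T ∪ (S ∩ D)` would cut off `D \ S` with a block `T ∪ D` properly inside `W`. -/
lemma subset_of_isDoubleStar (h : IsMinimalDSCSideOf G W S u v)
    (hX : IsDoubleStar G (T ∪ S ∩ D)) (hTW : T ⊆ W) (hDW : D ⊆ W \ T)
    (hrest : ((W \ T) \ D).Nonempty) (hcl : ∀ y ∈ D, ∀ z ∈ W \ T, G.Adj y z → z ∈ D) :
    D ⊆ S := by
  by_contra! hDS
  obtain ⟨y, hy, hyS⟩ := Set.not_subset.1 hDS
  replace hDS : (D \ S).Nonempty := ⟨y, hy, hyS⟩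
  have hcl' : ∀ y ∈ D \ S, ∀ z, G.Adj y z → z ∈ T ∪ S ∩ D ∪ D \ S := by
    intro y hy z hyz
    rcases h.adj_mem_of_closed hDW hcl y hy z hyz with hzT | hzD
    · exact Or.inl (Or.inl hzT)
    · by_cases hzS : z ∈ S
      · exact Or.inl (Or.inr ⟨hzS, hzD⟩)
      · exact Or.inr ⟨hzD, hzS⟩
  have hWsub := h.subset_union hX hDS
    (Set.disjoint_left.2 fun y hy hy' => hy.elim (fun hyT => (hDW hy'.1).2 hyT)
      fun hyS => hy'.2 hyS.1) hcl'
    (Set.union_subset (Set.union_subset hTW (Set.inter_subset_left.trans h.subset))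
      (Set.sdiff_subset.trans (hDW.trans Set.sdiff_subset)))
  obtain ⟨w, ⟨hwW, hwT⟩, hwD⟩ := hrest
  rcases hWsub hwW with (hw | hw) | hw
  · exact hwT hw
  · exact hwD hw.2
  · exact hwD hw.1

/-- A vertex `s ∈ D ⊆ S` would have two neighbours in the star `T`: one in `C₁`, by
minimality, and one among `u, v`. -/
lemma not_subset_of_closed (h : IsMinimalDSCSideOf G W S u v) (htri : G.CliqueFree 3)
    (hsq : FourCycleFree G) (hxT : x ∈ T) (hT : ∀ w ∈ T, w = x ∨ G.Adj x w)
    (hDW : D ⊆ W \ T) (hD : D.Nonempty) (hcl : ∀ y ∈ D, ∀ z ∈ W \ T, G.Adj y z → z ∈ D)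
    (hu : u ∉ D) (hv : v ∉ D) : ¬ D ⊆ S := by
  intro hDS
  obtain ⟨s, hsD⟩ := hD
  obtain ⟨c, ⟨hcW, hcS⟩, hsc⟩ := h.exists_adj_diff (hDS hsD) (fun h => hu (h ▸ hsD))
    (fun h => hv (h ▸ hsD))
  have hcT : c ∈ T := by_contra fun hcT => hcS (hDS (hcl s hsD c ⟨hcW, hcT⟩ hsc))
  obtain ⟨q, hqT, hquv, hqs⟩ := h.exists_adj_of_mem_inter hcl hu hv s ⟨hDS hsD, hsD⟩
  have hqS : q ∈ S := hquv.elim (· ▸ h.left_mem) (· ▸ h.right_mem)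
  have hsx : s ≠ x := fun hsx => (hDW hsD).2 (hsx ▸ hxT)
  exact hcS (hsq.eq_of_adj_of_adj htri hT hsx hqT hcT hqs.symm hsc ▸ hqS)

lemma mem_or_mem_of_closed (h : IsMinimalDSCSideOf G W S u v) (h2c : TwoConnected G)
    (htri : G.CliqueFree 3) (hsq : FourCycleFree G) (hxT : x ∈ T)
    (hT : ∀ w ∈ T, w = x ∨ G.Adj x w) (hTW : T ⊆ W) (hDW : D ⊆ W \ T) (hD : D.Nonempty)
    (hrest : ((W \ T) \ D).Nonempty) (hcl : ∀ y ∈ D, ∀ z ∈ W \ T, G.Adj y z → z ∈ D) :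
    u ∈ D ∨ v ∈ D := by
  by_contra! ⟨hu, hv⟩
  rcases isDoubleStar_or_subset_singleton_union htri h.adj hxT hT
    (h.exists_adj_of_mem_inter hcl hu hv) with hX | hsub
  · exact h.not_subset_of_closed htri hsq hxT hT hDW hD hcl hu hv
      (h.subset_of_isDoubleStar hX hTW hDW hrest hcl)
  · have hxD : x ∉ D := fun hxD => (hDW hxD).2 hxT
    have hclx : ∀ y ∈ D, ∀ z, G.Adj y z → z = x ∨ z ∈ D := by
      intro y hy z hyz
      have hyS : y ∉ S := fun hyS => hxD ((hsub (Or.inr ⟨hyS, hy⟩) : y = x) ▸ hy)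
      exact (h.adj_mem_of_closed hDW hcl y ⟨hy, hyS⟩ z hyz).imp_left fun hzT => hsub (Or.inl hzT)
    obtain ⟨y, hy⟩ := hD
    obtain ⟨z, hz⟩ := h.exists_notMem
    rcases h2c.forall_eq_or_mem hxD hy hclx z with rfl | hzD
    · exact hz (hTW hxT)
    · exact hz (hDW hzD).1

end IsMinimalDSCSideOf

end

lemma IsMinimalDSCSide.noStarCutset {G : SimpleGraph V} {W : Set V} (h2c : TwoConnected G)
    (htri : G.CliqueFree 3) (hsq : FourCycleFree G) (hW : IsMinimalDSCSide G W) :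
    NoStarCutset (G.induce W) := by
  obtain ⟨S, u, v, h⟩ := hW.exists_isMinimalDSCSideOf
  rintro T ⟨⟨x, hxT, hdom⟩, hdisc⟩
  have hT : ∀ w ∈ Subtype.val '' T, w = x ∨ G.Adj x w := by
    rintro _ ⟨w, hw, rfl⟩
    exact (hdom w hw).imp_left (congrArg Subtype.val)
  have hTW : Subtype.val '' T ⊆ W := Subtype.coe_image_subset W T
  have hxT' := Set.mem_image_of_mem Subtype.val hxT
  rw [RemoveDisconnects, induce_induce_connected_iff] at hdisc
  rcases exists_closed_of_not_induce_connected hdisc with hempty | ⟨D, hDW, hD, hrest, hcl⟩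
  · exact h.not_subset_star h2c htri hT (Set.sdiff_eq_empty.1 hempty)
  obtain ⟨y, hy⟩ := hD
  rcases h.adj.notMem_or_notMem_diff hcl with ⟨hu, hv⟩ | ⟨hu, hv⟩
  · exact (h.mem_or_mem_of_closed h2c htri hsq hxT' hT hTW hDW ⟨y, hy⟩ hrest hcl).elim hu hv
  · exact (h.mem_or_mem_of_closed h2c htri hsq hxT' hT hTW Set.sdiff_subset hrest
      ⟨y, hDW hy, fun h => h.2 hy⟩ (closed_diff_of_closed hcl)).elim hu hv

/-- a 2-connected 4-hole-free bipartite graph with a star cutset has a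
double star cutset one of whose blocks of decomposition has no star cutset; indeed any
minimal side of a minimally-sided double star cutset has no star cutset. -/
theorem stmt8 {V : Type u} [Fintype V] (G : SimpleGraph V)
    (h2c : TwoConnected G) (h4hf : FourHoleFree G) (hbip : Bipartite G)
    (hstar : ∃ S : Set V, IsStarCutset G S) :
    (∃ W : Set V, IsMinimalDSCSide G W ∧ NoStarCutset (G.induce W)) ∧
    (∀ W : Set V, IsMinimalDSCSide G W → NoStarCutset (G.induce W)) := by
  have htri := hbip.cliqueFree_three
  have hmain : ∀ W, IsMinimalDSCSide G W → NoStarCutset (G.induce W) :=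
    fun W hW => hW.noStarCutset h2c htri (h4hf.fourCycleFree htri)
  obtain ⟨S, hS⟩ := hstar
  obtain ⟨W₀, hW₀⟩ := exists_isDSCBlock h2c htri hS
  obtain ⟨W, hW⟩ := exists_isMinimalDSCSide hW₀
  exact ⟨⟨W, hW, hmain W hW⟩, hmain⟩
end
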